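/- arXiv:2108.13302 — 2 statements merged into one kernel-verified Lean document; each statement's English description precedes it below -/
import Mathlib

section
/- Let X be a finite set, n ≥ 1, p : X → ℝ a strictly positive p.m.f., and q_i : X → (0,1] for i = 1..n. Consider the primal problem P: maximize ∑_x β(x) over β : X → ℝ and α in the probability simplex over {1..n}, subject to β(x) ≤ α_i·p(x)/q_i(x) for all i,x; and the dual problem D: minimize μ over μ ∈ ℝ and s_{i,x} ≥ 0 with ∑_i s_{i,x} = 1 for all x and ∑_x (p(x)/q_i(x))·s_{i,x} ≤ μ for all i. Then the optimal values of P and D are equal. -/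
/-!
Both programs are the two sides of the zero-sum game in which one player picks a distribution
`α` over experts, the other picks for every `x` a distribution `t x` over experts, and the payoff
`∑ i, α i * ∑ x, c i x * t x i` is bilinear. Sion's minimax theorem on the product of simplices
gives a saddle point `(t, α)`. Its value is dual feasible, because no pure `α` does better against
`t`, and it is dominated by a primal value, because against `α` the best response of the other
player is the pure one choosing at each `x` an expert that minimises `α i * c i x`. Weak duality
closes the gap.
-/

open Finset

theorem csSup_eq_csInf_of_forall_le {α : Type*} [ConditionallyCompleteLattice α]
    {S T : Set α} {a b : α} (hST : ∀ x ∈ S, ∀ y ∈ T, x ≤ y)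
    (ha : a ∈ T) (hb : b ∈ S) (hab : a ≤ b) : sSup S = sInf T := by
  obtain rfl : b = a := le_antisymm (hST b hb a ha) hab
  rw [IsGreatest.csSup_eq ⟨hb, fun x hx => hST x hx b ha⟩,
    IsLeast.csInf_eq ⟨ha, fun y hy => hST b hb y hy⟩]

namespace CoordinatingExperts

variable {ι X : Type*} [Fintype ι]

variable (ι X) in
def strategies : Set (X → ι → ℝ) := Set.univ.pi fun _ => stdSimplex ℝ ι

lemma convex_strategies : Convex ℝ (strategies ι X) :=
  convex_pi fun _ _ => convex_stdSimplex ℝ ι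

lemma isCompact_strategies : IsCompact (strategies ι X) :=
  isCompact_univ_pi fun _ => isCompact_stdSimplex ℝ ι

variable [Fintype X]

def primalValues (c : ι → X → ℝ) : Set ℝ :=
  {v | ∃ (β : X → ℝ) (α : ι → ℝ), (∀ i, 0 ≤ α i) ∧ (∑ i, α i) = 1 ∧
    (∀ i x, β x ≤ α i * c i x) ∧ v = ∑ x, β x}

def dualValues (c : ι → X → ℝ) : Set ℝ :=
  {μ | ∃ s : ι → X → ℝ, (∀ i x, 0 ≤ s i x) ∧ (∀ x, ∑ i, s i x = 1) ∧
    (∀ i, ∑ x, c i x * s i x ≤ μ)}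

def payoff (c : ι → X → ℝ) (t : X → ι → ℝ) (α : ι → ℝ) : ℝ :=
  ∑ i, α i * ∑ x, c i x * t x i

lemma payoff_add_smul_left (c : ι → X → ℝ) (t t' : X → ι → ℝ) (α : ι → ℝ) (a b : ℝ) :
    payoff c (a • t + b • t') α = a * payoff c t α + b * payoff c t' α := by
  simp only [payoff, Finset.mul_sum, ← Finset.sum_add_distrib]
  exact sum_congr rfl fun _ _ => sum_congr rfl fun _ _ => by simp; ring

lemma payoff_add_smul_right (c : ι → X → ℝ) (t : X → ι → ℝ) (α α' : ι → ℝ) (a b : ℝ) :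
    payoff c t (a • α + b • α') = a * payoff c t α + b * payoff c t α' := by
  simp only [payoff, Finset.mul_sum, ← Finset.sum_add_distrib]
  exact sum_congr rfl fun _ _ => sum_congr rfl fun _ _ => by simp; ring

lemma convexOn_payoff_left (c : ι → X → ℝ) (α : ι → ℝ) {K : Set (X → ι → ℝ)}
    (hK : Convex ℝ K) : ConvexOn ℝ K fun t => payoff c t α :=
  ⟨hK, fun t _ t' _ a b _ _ _ => (payoff_add_smul_left c t t' α a b).le⟩

lemma concaveOn_payoff_right (c : ι → X → ℝ) (t : X → ι → ℝ) {Δ : Set (ι → ℝ)}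
    (hΔ : Convex ℝ Δ) : ConcaveOn ℝ Δ (payoff c t) :=
  ⟨hΔ, fun α _ α' _ a b _ _ _ => (payoff_add_smul_right c t α α' a b).ge⟩

lemma continuous_payoff (c : ι → X → ℝ) :
    Continuous fun p : (X → ι → ℝ) × (ι → ℝ) => payoff c p.1 p.2 := by
  unfold payoff
  fun_prop

lemma payoff_eq_sum_sum (c : ι → X → ℝ) (t : X → ι → ℝ) (α : ι → ℝ) :
    payoff c t α = ∑ x, ∑ i, t x i * (α i * c i x) := by
  simp only [payoff, Finset.mul_sum]
  rw [Finset.sum_comm]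
  exact sum_congr rfl fun _ _ => sum_congr rfl fun _ _ => by ring

lemma payoff_single_right [DecidableEq ι] (c : ι → X → ℝ) (t : X → ι → ℝ) (i : ι) :
    payoff c t (Pi.single i 1) = ∑ x, c i x * t x i := by
  simp [payoff, Pi.single_apply]

lemma payoff_single_left [DecidableEq ι] (c : ι → X → ℝ) (j : X → ι) (α : ι → ℝ) :
    payoff c (fun x => Pi.single (j x) 1) α = ∑ x, α (j x) * c (j x) x := by
  simp [payoff_eq_sum_sum, Pi.single_apply]

lemma sum_le_payoff {c : ι → X → ℝ} {t : X → ι → ℝ} {α : ι → ℝ} {β : X → ℝ}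
    (ht : t ∈ strategies ι X) (hβ : ∀ i x, β x ≤ α i * c i x) :
    ∑ x, β x ≤ payoff c t α := by
  rw [payoff_eq_sum_sum]
  gcongr with x
  calc β x = ∑ i, t x i * β x := by rw [← sum_mul, (ht x trivial).2, one_mul]
    _ ≤ ∑ i, t x i * (α i * c i x) := by
      gcongr with i
      · exact (ht x trivial).1 i
      · exact hβ i x

lemma payoff_le {c : ι → X → ℝ} {t : X → ι → ℝ} {α : ι → ℝ} {μ : ℝ}
    (hα : α ∈ stdSimplex ℝ ι) (hμ : ∀ i, ∑ x, c i x * t x i ≤ μ) :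
    payoff c t α ≤ μ :=
  calc payoff c t α ≤ ∑ i, α i * μ := by
        unfold payoff
        gcongr with i
        · exact hα.1 i
        · exact hμ i
    _ = μ := by rw [← sum_mul, hα.2, one_mul]

lemma le_of_mem_primalValues_of_mem_dualValues {c : ι → X → ℝ} {v μ : ℝ}
    (hv : v ∈ primalValues c) (hμ : μ ∈ dualValues c) : v ≤ μ := by
  obtain ⟨β, α, hα₀, hα₁, hβ, rfl⟩ := hv
  obtain ⟨s, hs₀, hs₁, hsμ⟩ := hμ
  have hs : (fun x i => s i x) ∈ strategies ι X := fun x _ => ⟨fun i => hs₀ i x, hs₁ x⟩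
  exact (sum_le_payoff hs hβ).trans (payoff_le ⟨hα₀, hα₁⟩ hsμ)

lemma exists_isSaddlePointOn_payoff [Nonempty ι] (c : ι → X → ℝ) :
    ∃ t ∈ strategies ι X, ∃ α ∈ stdSimplex ℝ ι,
      IsSaddlePointOn (strategies ι X) (stdSimplex ℝ ι) (payoff c) t α := by
  have hΔ : (stdSimplex ℝ ι).Nonempty := Set.nonempty_coe_sort.1 inferInstance
  have hcont := continuous_payoff c
  exact Sion.exists_isSaddlePointOn (Set.univ_pi_nonempty_iff.2 fun _ => hΔ)
    convex_strategies isCompact_strategies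
    (fun α _ => (hcont.comp (.prodMk_left α)).continuousOn.lowerSemicontinuousOn)
    (fun α _ => (convexOn_payoff_left c α convex_strategies).quasiconvexOn)
    (convex_stdSimplex ℝ ι) hΔ (isCompact_stdSimplex ℝ ι)
    (fun t _ => (hcont.comp (.prodMk_right t)).continuousOn.upperSemicontinuousOn)
    (fun t _ => (concaveOn_payoff_right c t (convex_stdSimplex ℝ ι)).quasiconcaveOn)

lemma payoff_mem_dualValues {c : ι → X → ℝ} {t : X → ι → ℝ} {α : ι → ℝ}
    (ht : t ∈ strategies ι X)
    (h : IsSaddlePointOn (strategies ι X) (stdSimplex ℝ ι) (payoff c) t α) :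
    payoff c t α ∈ dualValues c := by
  classical
  refine ⟨fun i x => t x i, fun i x => (ht x trivial).1 i, fun x => (ht x trivial).2, fun i => ?_⟩
  rw [← payoff_single_right]
  exact h t ht _ (single_mem_stdSimplex ℝ i)

lemma exists_mem_primalValues_payoff_le [Nonempty ι] {c : ι → X → ℝ} {t : X → ι → ℝ}
    {α : ι → ℝ} (hα : α ∈ stdSimplex ℝ ι)
    (h : IsSaddlePointOn (strategies ι X) (stdSimplex ℝ ι) (payoff c) t α) :
    ∃ w ∈ primalValues c, payoff c t α ≤ w := by
  classical
  let β x := univ.inf' univ_nonempty fun i => α i * c i x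
  choose j _ hj using fun x => exists_mem_eq_inf' univ_nonempty fun i => α i * c i x
  refine ⟨∑ x, β x, ⟨β, α, hα.1, hα.2, fun i x => inf'_le _ (mem_univ i), rfl⟩, ?_⟩
  calc payoff c t α ≤ payoff c (fun x => Pi.single (j x) 1) α :=
        h _ (fun x _ => single_mem_stdSimplex ℝ (j x)) α hα
    _ = ∑ x, β x := by rw [payoff_single_left]; exact sum_congr rfl fun x _ => (hj x).symm

theorem sSup_primalValues_eq_sInf_dualValues [Nonempty ι] (c : ι → X → ℝ) :
    sSup (primalValues c) = sInf (dualValues c) := by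
  obtain ⟨t, ht, α, hα, h⟩ := exists_isSaddlePointOn_payoff c
  obtain ⟨w, hw, hle⟩ := exists_mem_primalValues_payoff_le hα h
  exact csSup_eq_csInf_of_forall_le
    (fun _ hv _ hμ => le_of_mem_primalValues_of_mem_dualValues hv hμ)
    (payoff_mem_dualValues ht h) hw hle

end CoordinatingExperts

theorem stmt_7_general (X : Type*) [Fintype X] (n : ℕ) (hn : 1 ≤ n)
    (p : X → ℝ) (q : Fin n → X → ℝ) :
    sSup {v : ℝ | ∃ (β : X → ℝ) (α : Fin n → ℝ),
        (∀ i, 0 ≤ α i) ∧ (∑ i, α i) = 1 ∧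
        (∀ i x, β x ≤ α i * p x / q i x) ∧
        v = ∑ x, β x}
      = sInf {μ : ℝ | ∃ s : Fin n → X → ℝ,
        (∀ i x, 0 ≤ s i x) ∧ (∀ x, ∑ i, s i x = 1) ∧
        (∀ i, ∑ x, p x / q i x * s i x ≤ μ)} := by
  have : Nonempty (Fin n) := ⟨⟨0, hn⟩⟩
  simp only [mul_div_assoc]
  exact CoordinatingExperts.sSup_primalValues_eq_sInf_dualValues fun i x => p x / q i x

/-- Strong LP duality for the multiple-coordinating-experts capacity problem:
    the primal (max ∑_x β(x) s.t. β(x) ≤ α_i p(x)/q_i(x), α in simplex) and the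
    dual (min μ s.t. ∑_x (p(x)/q_i(x)) s_{i,x} ≤ μ, s_{·,x} a p.m.f. over i)
    have equal optimal values. -/
theorem stmt_7 (X : Type*) [Fintype X] [Nonempty X] (n : ℕ) (hn : 1 ≤ n)
    (p : X → ℝ) (q : Fin n → X → ℝ)
    (hp : ∀ x, 0 < p x) (hpsum : ∑ x, p x = 1)
    (hq : ∀ i x, 0 < q i x) (hq1 : ∀ i x, q i x ≤ 1) :
    sSup {v : ℝ | ∃ (β : X → ℝ) (α : Fin n → ℝ),
        (∀ i, 0 ≤ α i) ∧ (∑ i, α i) = 1 ∧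
        (∀ i x, β x ≤ α i * p x / q i x) ∧
        v = ∑ x, β x}
      = sInf {μ : ℝ | ∃ s : Fin n → X → ℝ,
        (∀ i x, 0 ≤ s i x) ∧ (∀ x, ∑ i, s i x = 1) ∧
        (∀ i, ∑ x, p x / q i x * s i x ≤ μ)} :=
  stmt_7_general X n hn p q
end

section
/- Let X be a finite set, p a strictly positive p.m.f. on X, q : X → (0,1], ε > 0. The optimal value λ*(ε) of the loss-constrained capacity problem (maximize λ subject to existence of μ ∈ [0,1]^X with λ∑_x μ(x)p(x)/q(x) ≤ 1 and λ∑_x(1−μ(x))p(x) ≤ ε) is nondecreasing in ε, and satisfies λ*(0) = (∑_x p(x)/q(x))⁻¹ ≤ λ*(ε) ≤ max_x q(x) + ε. -/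
/-- The feasible set of the loss-constrained capacity problem with budget e. -/
def lossFeasible (X : Type*) [Fintype X] (p q : X → ℝ) (e : ℝ) : Set ℝ :=
  {lam : ℝ | 0 ≤ lam ∧ ∃ μ : X → ℝ, (∀ x, 0 ≤ μ x ∧ μ x ≤ 1) ∧
    lam * ∑ x, μ x * p x / q x ≤ 1 ∧
    lam * ∑ x, (1 - μ x) * p x ≤ e}

/-- Monotonicity and bounds for the loss-constrained capacity λ*(ε):
    it is nondecreasing in ε, λ*(0) = (∑_x p(x)/q(x))⁻¹ ≤ λ*(ε), and
    λ*(ε) ≤ max_x q(x) + ε. -/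
theorem stmt_19 (X : Type*) [Fintype X] [Nonempty X]
    (p q : X → ℝ)
    (hp : ∀ x, 0 < p x) (hpsum : ∑ x, p x = 1)
    (hq : ∀ x, 0 < q x) (hq1 : ∀ x, q x ≤ 1)
    (ε : ℝ) (hε : 0 < ε) :
    (∀ e e' : ℝ, 0 ≤ e → e ≤ e' →
      sSup (lossFeasible X p q e) ≤ sSup (lossFeasible X p q e')) ∧
    sSup (lossFeasible X p q 0) = (∑ x, p x / q x)⁻¹ ∧
    sSup (lossFeasible X p q 0) ≤ sSup (lossFeasible X p q ε) ∧
    sSup (lossFeasible X p q ε) ≤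
      Finset.univ.sup' Finset.univ_nonempty q + ε := by
  classical
  set M := Finset.univ.sup' Finset.univ_nonempty q with hM
  have hqM : ∀ x, q x ≤ M := fun x => Finset.le_sup' q (Finset.mem_univ x)
  have hM0 : 0 < M := lt_of_lt_of_le (hq (Classical.arbitrary X)) (hqM _)
  -- general upper bound on feasible points
  have hub : ∀ e : ℝ, ∀ lam ∈ lossFeasible X p q e, lam ≤ M + e := by
    intro e lam hmem
    obtain ⟨hlam0, μ, hμ, h1, h2⟩ := hmem
    have hsum1 : ∑ x, μ x * p x ≤ M * ∑ x, μ x * p x / q x := by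
      rw [Finset.mul_sum]
      apply Finset.sum_le_sum
      intro x _
      have hμp : 0 ≤ μ x * p x := mul_nonneg (hμ x).1 (hp x).le
      have h1 : μ x * p x * q x ≤ M * (μ x * p x) := by
        rw [mul_comm M]
        exact mul_le_mul_of_nonneg_left (hqM x) hμp
      calc μ x * p x = μ x * p x * q x / q x := by
            rw [mul_div_cancel_right₀ _ (hq x).ne']
        _ ≤ M * (μ x * p x) / q x := by
            gcongr
            exact (hq x).le
        _ = M * (μ x * p x / q x) := by ring
    have key : lam * ∑ x, μ x * p x ≤ M := by
      calc lam * ∑ x, μ x * p x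
          ≤ lam * (M * ∑ x, μ x * p x / q x) :=
            mul_le_mul_of_nonneg_left hsum1 hlam0
        _ = M * (lam * ∑ x, μ x * p x / q x) := by ring
        _ ≤ M * 1 := mul_le_mul_of_nonneg_left h1 hM0.le
        _ = M := mul_one M
    have split : ∑ x, μ x * p x + ∑ x, (1 - μ x) * p x = 1 := by
      rw [← Finset.sum_add_distrib]
      calc ∑ x, (μ x * p x + (1 - μ x) * p x) = ∑ x, p x :=
            Finset.sum_congr rfl (fun x _ => by ring)
        _ = 1 := hpsum
    calc lam = lam * 1 := (mul_one lam).symm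
      _ = lam * ∑ x, μ x * p x + lam * ∑ x, (1 - μ x) * p x := by
          rw [← mul_add, split]
      _ ≤ M + e := add_le_add key h2
  have hmem0 : ∀ e : ℝ, 0 ≤ e → (0 : ℝ) ∈ lossFeasible X p q e := by
    intro e he
    exact ⟨le_refl 0, fun _ => 1, fun x => ⟨zero_le_one, le_refl 1⟩,
      by simp, by simpa using he⟩
  have hmono : ∀ e e' : ℝ, 0 ≤ e → e ≤ e' →
      sSup (lossFeasible X p q e) ≤ sSup (lossFeasible X p q e') := by
    intro e e' he hee'
    refine csSup_le_csSup ⟨M + e', fun lam h => hub e' lam h⟩ ⟨0, hmem0 e he⟩ ?_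
    rintro lam ⟨h0, μ, hμ, h1, h2⟩
    exact ⟨h0, μ, hμ, h1, h2.trans hee'⟩
  set S := ∑ x, p x / q x with hSdef
  have hS0 : 0 < S := Finset.sum_pos
    (fun x _ => div_pos (hp x) (hq x)) Finset.univ_nonempty
  have hzero : sSup (lossFeasible X p q 0) = S⁻¹ := by
    apply IsGreatest.csSup_eq
    constructor
    · refine ⟨inv_nonneg.2 hS0.le, fun _ => 1, fun x => ⟨zero_le_one, le_rfl⟩, ?_, by simp⟩
      have : ∑ x, 1 * p x / q x = S := by
        simp [hSdef]
      rw [this, inv_mul_cancel₀ hS0.ne']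
    · rintro lam ⟨h0, μ, hμ, h1, h2⟩
      rcases h0.eq_or_lt with h | hlam
      · rw [← h]; exact inv_nonneg.2 hS0.le
      · have hs : ∑ x, (1 - μ x) * p x ≤ 0 := by
          have := h2
          rw [show (0 : ℝ) = lam * 0 by ring] at this
          exact le_of_mul_le_mul_left this hlam
        have hnn : ∀ x ∈ Finset.univ, 0 ≤ (1 - μ x) * p x := fun x _ =>
          mul_nonneg (by linarith [(hμ x).2]) (hp x).le
        have hsum0 : ∑ x, (1 - μ x) * p x = 0 :=
          le_antisymm hs (Finset.sum_nonneg hnn)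
        have hμ1 : ∀ x, μ x = 1 := by
          intro x
          have hx := (Finset.sum_eq_zero_iff_of_nonneg hnn).1 hsum0 x (Finset.mem_univ x)
          rcases mul_eq_zero.1 hx with h' | h'
          · linarith
          · exact absurd h' (hp x).ne'
        have hS : ∑ x, μ x * p x / q x = S :=
          Finset.sum_congr rfl (fun x _ => by rw [hμ1 x, one_mul])
        rw [hS] at h1
        have : lam ≤ 1 / S := (le_div_iff₀ hS0).2 h1
        rwa [one_div] at this
  refine ⟨hmono, hzero, hmono 0 ε le_rfl hε.le, ?_⟩
  exact csSup_le ⟨0, hmem0 ε hε.le⟩ (hub ε)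
end
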